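/- If M is a stochastic shortest path MDP with a goal state, and B is a deterministic Turing machine (MDP solver) that halts on input M with a configuration encoding a proper policy for M, then the meta-MDP Meta_B(M) — whose states are pairs (world state, solver configuration), whose actions are the base actions plus NOP, and whose transitions follow the base MDP while NOP additionally advances the solver configuration deterministically — has at least one proper policy, i.e., a policy reaching a goal state of Meta_B(M) with probability 1 from every state. -/
import Mathlib


open Filter

/-- Probability of hitting the goal set `G` within `n` steps under Markov kernel `P`. -/
noncomputable def hitProb {σ : Type*} [Fintype σ] (P : σ → σ → ℝ) (G : σ → Prop)
    [DecidablePred G] : ℕ → σ → ℝ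
  | 0, s => if G s then 1 else 0
  | n + 1, s => if G s then 1 else ∑ s' : σ, P s s' * hitProb P G n s'

/-- A (stationary) Markov chain is proper from `s` if it reaches the goal with probability 1. -/
def ProperFrom {σ : Type*} [Fintype σ] (P : σ → σ → ℝ) (G : σ → Prop)
    [DecidablePred G] (s : σ) : Prop :=
  Tendsto (fun n => hitProb P G n s) atTop (nhds 1)

lemma hitProb_succ {σ : Type*} [Fintype σ] (P : σ → σ → ℝ) (G : σ → Prop)
    [DecidablePred G] (n : ℕ) (s : σ) :
    hitProb P G (n+1) s = if G s then 1 else ∑ s' : σ, P s s' * hitProb P G n s' := rfl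

lemma hitProb_nonneg {σ : Type*} [Fintype σ] (P : σ → σ → ℝ) (G : σ → Prop)
    [DecidablePred G] (hP0 : ∀ s s', 0 ≤ P s s') : ∀ n s, 0 ≤ hitProb P G n s
  | 0, s => by unfold hitProb; split <;> norm_num
  | n+1, s => by
      unfold hitProb; split
      · norm_num
      · exact Finset.sum_nonneg fun s' _ =>
          mul_nonneg (hP0 s s') (hitProb_nonneg P G hP0 n s')

lemma hitProb_le_one {σ : Type*} [Fintype σ] (P : σ → σ → ℝ) (G : σ → Prop)
    [DecidablePred G] (hP0 : ∀ s s', 0 ≤ P s s') (hP1 : ∀ s, ∑ s', P s s' = 1) :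
    ∀ n s, hitProb P G n s ≤ 1
  | 0, s => by unfold hitProb; split <;> norm_num
  | n+1, s => by
      unfold hitProb; split
      · norm_num
      · calc ∑ s', P s s' * hitProb P G n s'
            ≤ ∑ s', P s s' * 1 := Finset.sum_le_sum fun s' _ =>
              mul_le_mul_of_nonneg_left (hitProb_le_one P G hP0 hP1 n s') (hP0 s s')
          _ = 1 := by simp [hP1 s]

/-- if the base SSP MDP `M` has a complete proper policy and the deterministic
solver `B` halts on `M` with a configuration whose associated policy is proper, then the
meta-MDP `Meta_B(M)` has at least one proper policy: a policy (always choosing either `NOP`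
or the currently recommended action `f s χ`) reaching a goal state `(s_g, ·)` of the
meta-MDP with probability 1 from every state. -/
theorem meta_mdp_has_proper_policy
    {S A X : Type*} [Fintype S] [Fintype X] [DecidableEq S] [DecidableEq X] [DecidableEq A]
    (T : S → A → S → ℝ) (sg : S) (nop : A)
    (hT0 : ∀ s a s', 0 ≤ T s a s') (hT1 : ∀ s a, ∑ s', T s a s' = 1)
    -- M is an SSP MDP: it admits a complete proper policy
    (hSSP : ∃ π : S → A, ∀ s, ProperFrom (fun s s' => T s (π s) s') (fun t => t = sg) s)
    (B : X → X) (χ0 : X) (f : S → X → A)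
    -- X is the set of configurations entered by B on input M
    (hX : ∀ χ : X, ∃ i, B^[i] χ0 = χ)
    -- B halts on M with a configuration encoding a proper policy for M
    (hB : ∃ N, (∀ m, N ≤ m → B^[m] χ0 = B^[N] χ0) ∧
      ∀ s, ProperFrom (fun s s' => T s (f s (B^[N] χ0)) s') (fun t => t = sg) s) :
    ∃ πm : S × X → A,
      (∀ p : S × X, πm p = nop ∨ πm p = f p.1 p.2) ∧
      ∀ p : S × X, ProperFrom
        (fun p p' : S × X =>
          if πm p = nop then (if p'.2 = B p.2 then T p.1 nop p'.1 else 0)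
          else (if p'.2 = p.2 then T p.1 (πm p) p'.1 else 0))
        (fun p => p.1 = sg) p := by
  classical
  obtain ⟨N, hstab, hprop⟩ := hB
  set χs := B^[N] χ0 with hχsdef
  have hfix : B χs = χs := by
    have h := hstab (N+1) (Nat.le_succ N)
    rwa [Function.iterate_succ_apply'] at h
  have hreach : ∀ χ : X, B^[N] χ = χs := by
    intro χ
    obtain ⟨i, hi⟩ := hX χ
    rw [← hi, ← Function.iterate_add_apply, hstab (N+i) (Nat.le_add_right _ _)]
  set πm : S × X → A := fun p => if p.2 = χs then f p.1 p.2 else nop with hπm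
  refine ⟨πm, fun p => ?_, fun p => ?_⟩
  · by_cases h : p.2 = χs <;> simp [hπm, h]
  set P : S × X → S × X → ℝ := fun p p' =>
    if πm p = nop then (if p'.2 = B p.2 then T p.1 nop p'.1 else 0)
    else (if p'.2 = p.2 then T p.1 (πm p) p'.1 else 0) with hPdef
  have hπval : ∀ p p' : S × X, P p p' =
      if p'.2 = (if πm p = nop then B p.2 else p.2) then T p.1 (πm p) p'.1 else 0 := by
    intro p p'
    by_cases h : πm p = nop
    · simp [hPdef, h]
    · simp [hPdef, h]
  have hP0 : ∀ p p', 0 ≤ P p p' := by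
    intro p p'
    rw [hπval]
    split_ifs <;> first | exact hT0 _ _ _ | exact le_rfl
  have hP1 : ∀ p, ∑ p', P p p' = 1 := by
    intro p
    simp_rw [hπval p]
    rw [Fintype.sum_prod_type]
    have hinner : ∀ s' : S,
        (∑ χ' : X, if χ' = (if πm p = nop then B p.2 else p.2)
          then T p.1 (πm p) s' else 0) = T p.1 (πm p) s' := by
      intro s'
      rw [Finset.sum_ite_eq']
      simp
    simp_rw [hinner]
    exact hT1 _ _
  set Q : S → S → ℝ := fun s s' => T s (f s χs) s' with hQdef
  have hQ0 : ∀ s s', 0 ≤ Q s s' := fun s s' => hT0 _ _ _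
  have hQ1 : ∀ s, ∑ s', Q s s' = 1 := fun s => hT1 _ _
  have hPs : ∀ s s' χ', P (s, χs) (s', χ') = if χ' = χs then Q s s' else 0 := by
    intro s s' χ'
    rw [hπval]
    have h1 : πm (s, χs) = f s χs := by simp [hπm]
    dsimp only
    rw [h1]
    by_cases h : f s χs = nop
    · rw [if_pos h, hfix]
    · rw [if_neg h]
  have heq : ∀ n s, hitProb P (fun p => p.1 = sg) n (s, χs)
      = hitProb Q (fun t => t = sg) n s := by
    intro n
    induction n with
    | zero => intro s; simp [hitProb]
    | succ n ih =>
      intro s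
      by_cases hs : s = sg
      · simp [hitProb_succ, hs]
      · rw [hitProb_succ, hitProb_succ]
        simp only [hs, if_false]
        rw [Fintype.sum_prod_type]
        refine Finset.sum_congr rfl fun s' _ => ?_
        rw [← ih s']
        rw [Finset.sum_eq_single χs]
        · rw [hPs, if_pos rfl]
        · intro b _ hb
          rw [hPs, if_neg hb, zero_mul]
        · intro h; exact absurd (Finset.mem_univ χs) h
  haveI : Nonempty S := ⟨sg⟩
  set g : ℕ → ℝ := fun n => Finset.univ.inf' Finset.univ_nonempty
    (fun s => hitProb Q (fun t => t = sg) n s) with hgdef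
  have hg_le : ∀ n s, g n ≤ hitProb Q (fun t => t = sg) n s := fun n s =>
    Finset.inf'_le _ (Finset.mem_univ s)
  have hg1 : ∀ n, g n ≤ 1 := fun n =>
    le_trans (hg_le n sg) (hitProb_le_one Q _ hQ0 hQ1 n sg)
  have key : ∀ k (χ : X), B^[k] χ = χs → ∀ n s,
      g n ≤ hitProb P (fun p => p.1 = sg) (n + k) (s, χ) := by
    intro k
    induction k with
    | zero =>
      intro χ hχ n s
      simp only [Function.iterate_zero, id_eq] at hχ
      subst hχ
      rw [Nat.add_zero, heq]
      exact hg_le n s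
    | succ k ih =>
      intro χ hχ n s
      by_cases hs : s = sg
      · have h1 : hitProb P (fun p => p.1 = sg) (n + (k+1)) (s, χ) = 1 := by
          rw [show n + (k+1) = (n+k) + 1 from rfl, hitProb_succ]
          simp [hs]
        rw [h1]; exact hg1 n
      · rw [show n + (k+1) = (n+k) + 1 from rfl, hitProb_succ]
        simp only [hs, if_false]
        set χ'' : X := if πm (s, χ) = nop then B χ else χ with hχ''
        have hχ''s : B^[k] χ'' = χs := by
          rw [hχ'']
          split
          · rwa [← Function.iterate_succ_apply]
          · rename_i h
            have hc : χ = χs := by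
              by_contra hne
              exact h (by simp [hπm, hne])
            rw [hc]
            exact Function.iterate_fixed hfix k
        have hrow : ∑ p' : S × X, P (s, χ) p' * g n = g n := by
          rw [← Finset.sum_mul, hP1, one_mul]
        calc g n = ∑ p' : S × X, P (s, χ) p' * g n := hrow.symm
          _ ≤ ∑ p' : S × X, P (s, χ) p' * hitProb P (fun p => p.1 = sg) (n+k) p' := by
            refine Finset.sum_le_sum fun p' _ => ?_
            rcases p' with ⟨s', χ'⟩
            have hPv : P (s, χ) (s', χ') = if χ' = χ'' then T s (πm (s, χ)) s' else 0 := by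
              rw [hπval]
            rw [hPv]
            by_cases hc : χ' = χ''
            · rw [if_pos hc, hc]
              exact mul_le_mul_of_nonneg_left (ih χ'' hχ''s n s') (hT0 _ _ _)
            · rw [if_neg hc, zero_mul, zero_mul]
  have hglim : Tendsto g atTop (nhds 1) := by
    rw [tendsto_order]
    constructor
    · intro a ha
      have hev : ∀ s : S, ∀ᶠ n in atTop, a < hitProb Q (fun t => t = sg) n s := by
        intro s
        exact (hprop s).eventually (eventually_gt_nhds ha)
      have hall : ∀ᶠ n in atTop, ∀ s : S, a < hitProb Q (fun t => t = sg) n s :=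
        eventually_all.2 hev
      filter_upwards [hall] with n hn
      exact (Finset.lt_inf'_iff _).2 fun s _ => hn s
    · intro a ha
      filter_upwards with n
      exact lt_of_le_of_lt (hg1 n) ha
  rcases p with ⟨s, χ⟩
  have hlow : ∀ᶠ n in atTop, g (n - N) ≤ hitProb P (fun p => p.1 = sg) n (s, χ) := by
    filter_upwards [eventually_ge_atTop N] with n hn
    have h2 := key N χ (hreach χ) (n - N) s
    rwa [Nat.sub_add_cancel hn] at h2
  have hup : ∀ᶠ n in atTop, hitProb P (fun p => p.1 = sg) n (s, χ) ≤ 1 := by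
    filter_upwards with n
    exact hitProb_le_one P _ hP0 hP1 n (s, χ)
  exact tendsto_of_tendsto_of_tendsto_of_le_of_le'
    (hglim.comp (tendsto_sub_atTop_nat N)) tendsto_const_nhds hlow hup
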